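/- arXiv:2002.11345 — 2 statements merged into one kernel-verified Lean document; each statement's English description precedes it below -/
import Mathlib

section
/- Let R = F2[x1^{±1},...,xd^{±1}] with adjoint †. Let S be a 2K×N matrix over R, P = (I_{K×K}; I_{K×K}) a 2K×K matrix, and σ_F = (S P). Suppose T is an N×N matrix over R with T + T† = S†S. Define X̃ = (T; I_{N×N}) (a 2N×N matrix), Z̃ = (S†P; 0_{N×K}) (a 2N×K matrix), and σ̃ = (X̃ Z̃). Then σ̃†λ_N σ̃ = σ_F†σ_F, where λ_N = (0 I_N; I_N 0). -/
/-- The Laurent polynomial ring `F₂[x₁^{±1},…,x_d^{±1}]`, realized as the group algebra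
of `ℤ^d` over `F₂`. -/
abbrev R (d : ℕ) : Type := AddMonoidAlgebra (ZMod 2) (Fin d → ℤ)

/-- The involution (antipode) `f ↦ f̄` induced by `xᵢ ↦ xᵢ⁻¹`, i.e. negation of exponents. -/
noncomputable def bar (d : ℕ) : R d ≃ₐ[ZMod 2] R d :=
  AddMonoidAlgebra.domCongr (ZMod 2) (ZMod 2) (AddEquiv.neg (Fin d → ℤ))

/-- The matrix adjoint `A†`: transpose with the involution applied entrywise. -/
noncomputable def adj {d : ℕ} {m n : Type*} (A : Matrix m n (R d)) : Matrix n m (R d) :=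
  (A.map (bar d)).transpose

/-- The standard symplectic form `λ_M = (0 I; I 0)` with `M × M` blocks. -/
noncomputable def lam (d M : ℕ) : Matrix (Fin M ⊕ Fin M) (Fin M ⊕ Fin M) (R d) :=
  Matrix.fromBlocks 0 1 1 0

/-!
In block form `σ̃ = (T S†P; I 0)`, so `σ̃†λ_N σ̃ = (T + T†, S†P; P†S, 0)`, while
`σ_F†σ_F = (S†S, S†P; P†S, P†P)`. The upper-left blocks agree by the hypothesis on `T`, and
`P†P = I + I = 0` because `R` has characteristic 2.
-/

instance (d : ℕ) : CharP (R d) 2 := charP_of_injective_algebraMap' (ZMod 2) 2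

section adj

variable {d : ℕ} {m n p : Type*}

lemma bar_bar (a : R d) : bar d (bar d a) = a := by
  ext; simp [bar]

lemma adj_adj (A : Matrix m n (R d)) : adj (adj A) = A := by
  ext; simp [adj, bar_bar]

lemma adj_zero : adj (0 : Matrix m n (R d)) = 0 := by
  ext; simp [adj]

lemma adj_one [DecidableEq n] : adj (1 : Matrix n n (R d)) = 1 := by
  rw [adj, Matrix.map_one _ (map_zero _) (map_one _), Matrix.transpose_one]

lemma adj_mul [Fintype n] (A : Matrix m n (R d)) (B : Matrix n p (R d)) :
    adj (A * B) = adj B * adj A := by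
  rw [adj, adj, adj, Matrix.map_mul (f := bar d), Matrix.transpose_mul]

lemma adj_fromRows {m₁ m₂ : Type*} (A₁ : Matrix m₁ n (R d)) (A₂ : Matrix m₂ n (R d)) :
    adj (Matrix.fromRows A₁ A₂) = Matrix.fromCols (adj A₁) (adj A₂) := by
  rw [adj, Matrix.fromRows_map, Matrix.transpose_fromRows, adj, adj]

lemma adj_fromCols {n₁ n₂ : Type*} (A₁ : Matrix m n₁ (R d)) (A₂ : Matrix m n₂ (R d)) :
    adj (Matrix.fromCols A₁ A₂) = Matrix.fromRows (adj A₁) (adj A₂) := by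
  rw [adj, Matrix.fromCols_map, Matrix.transpose_fromCols, adj, adj]

lemma adj_fromBlocks {m₁ m₂ n₁ n₂ : Type*} (A : Matrix m₁ n₁ (R d)) (B : Matrix m₁ n₂ (R d))
    (C : Matrix m₂ n₁ (R d)) (D : Matrix m₂ n₂ (R d)) :
    adj (Matrix.fromBlocks A B C D) = Matrix.fromBlocks (adj A) (adj C) (adj B) (adj D) := by
  rw [adj, Matrix.fromBlocks_map, Matrix.fromBlocks_transpose, adj, adj, adj, adj]

lemma adj_fromCols_mul_fromCols [Fintype m] {n₁ n₂ : Type*} (A₁ : Matrix m n₁ (R d))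
    (A₂ : Matrix m n₂ (R d)) :
    adj (Matrix.fromCols A₁ A₂) * Matrix.fromCols A₁ A₂ =
      Matrix.fromBlocks (adj A₁ * A₁) (adj A₁ * A₂) (adj A₂ * A₁) (adj A₂ * A₂) := by
  rw [adj_fromCols, Matrix.fromRows_mul_fromCols]

lemma adj_fromRows_one_one_mul_self [Fintype n] [DecidableEq n] :
    adj (Matrix.fromRows 1 1 : Matrix (n ⊕ n) n (R d)) *
      (Matrix.fromRows 1 1 : Matrix (n ⊕ n) n (R d)) = 0 := by
  rw [adj_fromRows, adj_one, Matrix.fromCols_mul_fromRows, Matrix.one_mul]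
  ext
  exact CharTwo.add_self_eq_zero _

lemma adj_fromBlocks_mul_lam_mul_fromBlocks_one_zero {M K : ℕ} (A : Matrix (Fin M) (Fin M) (R d))
    (B : Matrix (Fin M) (Fin K) (R d)) :
    adj (Matrix.fromBlocks A B 1 0 : Matrix (Fin M ⊕ Fin M) (Fin M ⊕ Fin K) (R d)) * lam d M *
        (Matrix.fromBlocks A B 1 0 : Matrix (Fin M ⊕ Fin M) (Fin M ⊕ Fin K) (R d)) =
      Matrix.fromBlocks (A + adj A) B (adj B) 0 := by
  simp only [adj_fromBlocks, adj_one, adj_zero, lam, Matrix.fromBlocks_multiply, Matrix.mul_zero,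
    Matrix.zero_mul, Matrix.mul_one, Matrix.one_mul, add_zero, zero_add]

end adj

/-- The Jordan-Wigner dual generating map preserves all (anti)commutation relations:
with `σ_F = (S P)`, `P = (I; I)`, `T + T† = S†S`, `X̃ = (T; I)`, `Z̃ = (S†P; 0)`,
and `σ̃ = (X̃ Z̃)`, one has `σ̃†λ_N σ̃ = σ_F† σ_F`. -/
theorem stmt_7 (d K N : ℕ) (S : Matrix (Fin K ⊕ Fin K) (Fin N) (R d))
    (P : Matrix (Fin K ⊕ Fin K) (Fin K) (R d))
    (hP : P = Matrix.fromRows 1 1)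
    (σF : Matrix (Fin K ⊕ Fin K) (Fin N ⊕ Fin K) (R d))
    (hσF : σF = Matrix.fromCols S P)
    (T : Matrix (Fin N) (Fin N) (R d))
    (hT : T + adj T = adj S * S)
    (Xt : Matrix (Fin N ⊕ Fin N) (Fin N) (R d))
    (hXt : Xt = Matrix.fromRows T 1)
    (Zt : Matrix (Fin N ⊕ Fin N) (Fin K) (R d))
    (hZt : Zt = Matrix.fromRows (adj S * P) 0)
    (σt : Matrix (Fin N ⊕ Fin N) (Fin N ⊕ Fin K) (R d))
    (hσt : σt = Matrix.fromCols Xt Zt) :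
    adj σt * lam d N * σt = adj σF * σF := by
  subst hσt hXt hZt hσF
  rw [Matrix.fromCols_fromRows_eq_fromBlocks, adj_fromBlocks_mul_lam_mul_fromBlocks_one_zero,
    adj_fromCols_mul_fromCols, adj_mul, adj_adj, hT, hP, adj_fromRows_one_one_mul_self]
end

section
/- Let R = F2[x^{±1}, y^{±1}] with involution f ↦ f̄ (x ↦ x^{-1}, y ↦ y^{-1}). There is no f ∈ R satisfying (1 + x^{-1}(1 + y + y^{-1}))·f + (1 + x(1 + y + y^{-1}))·f̄ = y² + y^{-2}. -/
/-!
Pair `R` with `F₂`-valued functions `μ` on the exponent lattice via `⟨μ, f⟩ = Σ_v μ(v) f_v`.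
Writing `A = 1 + x⁻¹(1 + y + y⁻¹)`, a solution `f` would make `g = A f + y²` invariant under the
involution. An even `μ` with `μ(0) = 0` pairs to zero with every invariant `g`, since the
coefficients at `v` and `-v` cancel in characteristic two. The pattern
`μ(a, b) = [a even, b ≡ 2 mod 4] + [a odd, b ≢ 0 mod 4]` is such a `μ`; it also kills the ideal
`A R` but takes the value `1` at `y²`, so `⟨μ, g⟩ = 1`.
-/

/-- The Laurent polynomial ring `F₂[x^{±1}, y^{±1}]` in two variables. -/
abbrev R2 : Type := AddMonoidAlgebra (ZMod 2) (Fin 2 → ℤ)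

/-- The monomial `x^a y^b`. -/
noncomputable def m2 (a b : ℤ) : R2 := AddMonoidAlgebra.single ![a, b] 1

/-- The involution `f ↦ f̄` given by `x ↦ x⁻¹`, `y ↦ y⁻¹`. -/
noncomputable def bar2 : R2 ≃ₐ[ZMod 2] R2 :=
  AddMonoidAlgebra.domCongr (ZMod 2) (ZMod 2) (AddEquiv.neg (Fin 2 → ℤ))

namespace AddMonoidAlgebra

variable {k G : Type*}

noncomputable def pairing [CommSemiring k] (μ : G → k) : AddMonoidAlgebra k G →ₗ[k] k :=
  Finsupp.linearCombination k μ ∘ₗ (coeffLinearEquiv k).toLinearMap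

@[simp]
theorem pairing_single [CommSemiring k] (μ : G → k) (v : G) (c : k) :
    pairing μ (single v c) = c * μ v := by
  simp [pairing]

theorem pairing_apply [CommSemiring k] (μ : G → k) (f : AddMonoidAlgebra k G) :
    pairing μ f = ∑ v ∈ f.coeff.support, f.coeff v * μ v := by
  simp [pairing, Finsupp.linearCombination_apply, Finsupp.sum]

theorem pairing_mul_eq_zero [CommSemiring k] [AddMonoid G] {μ : G → k} {a : AddMonoidAlgebra k G}
    (h : ∀ v, pairing μ (a * single v 1) = 0) (f : AddMonoidAlgebra k G) :
    pairing μ (a * f) = 0 := by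
  induction f using AddMonoidAlgebra.induction_linear with
  | zero => simp
  | add f g hf hg => rw [mul_add, map_add, hf, hg, add_zero]
  | single v c => rw [← mul_one c, ← smul_single', mul_smul_comm, map_smul, h, smul_zero]

theorem pairing_eq_zero_of_domCongr_neg [CommRing k] [CharP k 2] [AddCommGroup G]
    [IsAddTorsionFree G] {μ : G → k} (hμ : μ.Even) (hμ0 : μ 0 = 0) {g : AddMonoidAlgebra k G}
    (hg : domCongr k k (AddEquiv.neg G) g = g) :
    pairing μ g = 0 := by
  have hcoeff (v : G) : g.coeff (-v) = g.coeff v := by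
    simpa using congrArg (coeff · v) hg
  rw [pairing_apply]
  refine Finset.sum_involution (fun v _ => -v) (fun v _ => ?_) (fun v _ hv hneg => ?_)
    (fun v hv => by simpa [hcoeff] using hv) (fun v _ => neg_neg v)
  · rw [hcoeff, hμ, CharTwo.add_self_eq_zero]
  · have : v = 0 := neg_eq_self.mp hneg
    simp [this, hμ0] at hv

end AddMonoidAlgebra

open AddMonoidAlgebra

theorem m2_mul_single (a b : ℤ) (v : Fin 2 → ℤ) (c : ZMod 2) :
    m2 a b * single v c = single (![a, b] + v) c := by
  rw [m2, single_mul_single, one_mul]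

theorem m2_mul_m2 (a b c d : ℤ) : m2 a b * m2 c d = m2 (a + c) (b + d) := by
  simp [m2, single_mul_single]

theorem bar2_m2 (a b : ℤ) : bar2 (m2 a b) = m2 (-a) (-b) := by
  simp [bar2, m2, Matrix.neg_cons]

/-- Row `a` of the pattern is row `a - 1` multiplied by `1 + y + y⁻¹`, which is what makes it
annihilate `1 + x⁻¹(1 + y + y⁻¹)`; starting from row `0 = Σₙ y^(4n+2)` the rows have period two. -/
def fibPattern (v : Fin 2 → ℤ) : ZMod 2 :=
  if v 0 % 2 = 0 then if v 1 % 4 = 2 then 1 else 0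
  else if v 1 % 4 = 0 then 0 else 1

theorem fibPattern_even : fibPattern.Even := by
  intro v
  simp only [fibPattern, Pi.neg_apply]
  split_ifs <;> first | rfl | omega

theorem pairing_fibPattern_mul_single (v : Fin 2 → ℤ) :
    pairing fibPattern ((1 + m2 (-1) 0 * (1 + m2 0 1 + m2 0 (-1))) * single v 1) = 0 := by
  simp only [mul_add, add_mul, mul_one, one_mul, m2_mul_m2, m2_mul_single, map_add,
    pairing_single]
  simp only [fibPattern, Pi.add_apply, Matrix.cons_val_zero, Matrix.cons_val_one,
    Matrix.cons_val_fin_one]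
  split_ifs <;> first | decide | omega

/-- Non-existence of commuting interaction terms for the Fibonacci fractal fermion model:
`(1 + x⁻¹(1 + y + y⁻¹)) f + (1 + x(1 + y + y⁻¹)) f̄ = y² + y⁻²` has no solution. -/
theorem stmt_14 :
    ¬ ∃ f : R2,
      (1 + m2 (-1) 0 * (1 + m2 0 1 + m2 0 (-1))) * f
        + (1 + m2 1 0 * (1 + m2 0 1 + m2 0 (-1))) * bar2 f
      = m2 0 2 + m2 0 (-2) := by
  rintro ⟨f, hf⟩
  set g : R2 := (1 + m2 (-1) 0 * (1 + m2 0 1 + m2 0 (-1))) * f + m2 0 2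
  have hg : bar2 g = g := by
    have : CharP R2 2 := charP_of_injective_algebraMap' (ZMod 2) 2
    simp only [g, map_add, map_mul, map_one, bar2_m2, neg_neg, neg_zero]
    linear_combination hf + (m2 0 (-2) - (1 + m2 (-1) 0 * (1 + m2 0 1 + m2 0 (-1))) * f) *
      (CharTwo.two_eq_zero : (2 : R2) = 0)
  have h1 : pairing fibPattern g = 1 := by
    rw [map_add, pairing_mul_eq_zero pairing_fibPattern_mul_single, m2, pairing_single]
    decide
  have h0 : pairing fibPattern g = 0 :=
    pairing_eq_zero_of_domCongr_neg fibPattern_even (by decide) hg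
  exact one_ne_zero (h1.symm.trans h0)
end
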